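/- For orthogonal projections P,Q on a complex Hilbert space, the spectral radius of the commutator satisfies ρ([P,Q]) ≤ 1/2. -/

import Mathlib

/-!
For a star projection `p`, the element `2p - 1` is a self-adjoint unitary, hence a contraction.
The commutator of two contractions has norm at most `2`, and
`[2p - 1, 2q - 1] = 4 [p, q]`, so `‖[p, q]‖ ≤ 1/2`; the spectral radius is bounded by the norm.
-/

lemma CStarRing.norm_le_one_of_mem_unitary {E : Type*} [NormedRing E] [StarRing E] [CStarRing E]
    {U : E} (hU : U ∈ unitary E) : ‖U‖ ≤ 1 := by
  nontriviality E
  exact (norm_of_mem_unitary hU).le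

lemma norm_commutator_le_two_of_norm_le_one {E : Type*} [NormedRing E] {u v : E}
    (hu : ‖u‖ ≤ 1) (hv : ‖v‖ ≤ 1) : ‖u * v - v * u‖ ≤ 2 := by
  have huv : ‖u * v‖ ≤ 1 := (norm_mul_le u v).trans (mul_le_one₀ hu (norm_nonneg v) hv)
  have hvu : ‖v * u‖ ≤ 1 := (norm_mul_le v u).trans (mul_le_one₀ hv (norm_nonneg u) hu)
  calc ‖u * v - v * u‖ ≤ ‖u * v‖ + ‖v * u‖ := norm_sub_le _ _
    _ ≤ 2 := by linarith

lemma commutator_two_mul_sub_one {R : Type*} [Ring R] (p q : R) :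
    (2 * p - 1) * (2 * q - 1) - (2 * q - 1) * (2 * p - 1) = 4 • (p * q - q * p) := by
  noncomm_ring

lemma IsStarProjection.norm_commutator_le {A : Type*} [NormedRing A] [StarRing A] [CStarRing A]
    [NormedSpace ℝ A] {p q : A} (hp : IsStarProjection p) (hq : IsStarProjection q) :
    ‖p * q - q * p‖ ≤ 1 / 2 := by
  have h := norm_commutator_le_two_of_norm_le_one
    (CStarRing.norm_le_one_of_mem_unitary hp.two_mul_sub_one_mem_unitary)
    (CStarRing.norm_le_one_of_mem_unitary hq.two_mul_sub_one_mem_unitary)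
  rw [commutator_two_mul_sub_one, RCLike.norm_nsmul ℝ] at h
  norm_num at h
  linarith

lemma IsStarProjection.spectralRadius_commutator_le {A : Type*} [CStarAlgebra A] {p q : A}
    (hp : IsStarProjection p) (hq : IsStarProjection q) :
    spectralRadius ℂ (p * q - q * p) ≤ 1 / 2 := by
  nontriviality A
  calc spectralRadius ℂ (p * q - q * p) ≤ ‖p * q - q * p‖₊ := spectrum.spectralRadius_le_nnnorm _
    _ ≤ 1 / 2 := by simpa [enorm] using ENNReal.ofReal_le_ofReal (hp.norm_commutator_le hq)

theorem stmt_4 {V : Type*} [NormedAddCommGroup V] [InnerProductSpace ℂ V] [CompleteSpace V]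
    (P Q : V →L[ℂ] V)
    (hP : ContinuousLinearMap.adjoint P = P) (hP2 : P * P = P)
    (hQ : ContinuousLinearMap.adjoint Q = Q) (hQ2 : Q * Q = Q) :
    spectralRadius ℂ (P * Q - Q * P) ≤ 1 / 2 :=
  IsStarProjection.spectralRadius_commutator_le
    ⟨hP2, (ContinuousLinearMap.star_eq_adjoint P).trans hP⟩
    ⟨hQ2, (ContinuousLinearMap.star_eq_adjoint Q).trans hQ⟩
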